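/- arXiv:1312.0903 — 8 statements merged into one kernel-verified Lean document; each statement's English description precedes it below -/
import Mathlib

section
/- Assume P ≥ 1 and assume there exists at least one feasible subset J ⊆ {1,…,n} with w(J) = W. Then every subset I ⊆ {1,…,n} that minimizes |q(I) − Q| over all subsets of {1,…,n} satisfies w(I) = W. -/
/-! Write `q(K) - Q = 3P·(w(K) - W) + (p(K) - P)`, where `|p(K) - P| ≤ P` for every `K`. The
second summand is too small to make up for a nonzero first one: a feasible subset gets within `P`
of `Q`, an infeasible one stays at distance at least `3P - P = 2P > P`. -/

open Finset

lemma abs_three_mul_add_le_iff {P d r : ℤ} (hP : 0 < P) (hr : |r| ≤ P) :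
    |3 * P * d + r| ≤ P ↔ d = 0 := by
  refine ⟨fun h => ?_, fun hd => by simpa [hd] using hr⟩
  by_contra hd
  have hscaled : 3 * P ≤ |3 * P * d| := by
    rw [abs_mul, abs_of_pos (by positivity : 0 < 3 * P)]
    exact le_mul_of_one_le_right (by positivity) (Int.one_le_abs hd)
  have hgap : |3 * P * d| - |r| ≤ |3 * P * d + r| := by
    simpa using abs_sub_abs_le_abs_sub (3 * P * d) (-r)
  linarith

lemma abs_sum_sub_sum_univ_le {ι : Type*} [Fintype ι] {f : ι → ℤ} (hf : 0 ≤ f)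
    (K : Finset ι) : |∑ i ∈ K, f i - ∑ i, f i| ≤ ∑ i, f i := by
  have hK : 0 ≤ ∑ i ∈ K, f i := sum_nonneg fun i _ => hf i
  have hKuniv : ∑ i ∈ K, f i ≤ ∑ i, f i := sum_le_univ_sum_of_nonneg hf
  rw [abs_le]
  constructor <;> linarith

/-- In the reduction where `P = Σ p_i ≥ 1`, `q_i = 3P·w_i + p_i`, `Q = (3W+1)·P`, and
assuming some feasible subset `J` with `w(J) = W` exists: every subset `I` minimizing
`|q(I) − Q|` over all subsets satisfies `w(I) = W`. -/
theorem subsetsum_minimizers_are_feasible (n : ℕ) (w p : Fin n → ℕ) (W : ℕ)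
    (P Q : ℤ) (hP : P = ∑ i : Fin n, (p i : ℤ)) (hQ : Q = (3 * W + 1) * P)
    (q : Fin n → ℤ) (hq : ∀ i, q i = 3 * P * w i + p i)
    (hP1 : 1 ≤ P)
    (hfeas : ∃ J : Finset (Fin n), (∑ i ∈ J, (w i : ℤ)) = (W : ℤ))
    (I : Finset (Fin n))
    (hmin : ∀ J : Finset (Fin n), |(∑ i ∈ I, q i) - Q| ≤ |(∑ i ∈ J, q i) - Q|) :
    (∑ i ∈ I, (w i : ℤ)) = (W : ℤ) := by
  obtain ⟨J, hJ⟩ := hfeas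
  have hsplit : ∀ K : Finset (Fin n), ∑ i ∈ K, q i - Q =
      3 * P * (∑ i ∈ K, (w i : ℤ) - W) + (∑ i ∈ K, (p i : ℤ) - P) := by
    intro K
    simp only [hq, sum_add_distrib, ← mul_sum, hQ]
    ring
  have hprofit : ∀ K : Finset (Fin n), |∑ i ∈ K, (p i : ℤ) - P| ≤ P := fun K =>
    hP ▸ abs_sum_sub_sum_univ_le (fun i => Int.natCast_nonneg (p i)) K
  have hpos : 0 < P := by omega
  have hJnear : |∑ i ∈ J, q i - Q| ≤ P := by
    rw [hsplit, abs_three_mul_add_le_iff hpos (hprofit J)]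
    exact sub_eq_zero.2 hJ
  have hInear := (hmin J).trans hJnear
  rw [hsplit, abs_three_mul_add_le_iff hpos (hprofit I)] at hInear
  exact sub_eq_zero.1 hInear
end

section
/- Assume P ≥ 1 and assume there exists at least one feasible subset J ⊆ {1,…,n} with w(J) = W. Then a subset I ⊆ {1,…,n} minimizes |q(I) − Q| over all subsets of {1,…,n} if and only if w(I) = W and p(I) = max{ p(J) : J ⊆ {1,…,n}, w(J) = W }. -/
/-- In the reduction where `P = Σ p_i ≥ 1`, `q_i = 3P·w_i + p_i`, `Q = (3W+1)·P`, and
assuming some feasible subset exists: `I` minimizes `|q(I) − Q|` over all subsets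
iff `w(I) = W` and `p(I)` is maximum among all feasible subsets. -/
theorem subsetsum_minimizers_iff_knapsack_optimal (n : ℕ) (w p : Fin n → ℕ) (W : ℕ)
    (P Q : ℤ) (hP : P = ∑ i : Fin n, (p i : ℤ)) (hQ : Q = (3 * W + 1) * P)
    (q : Fin n → ℤ) (hq : ∀ i, q i = 3 * P * w i + p i)
    (hP1 : 1 ≤ P)
    (hfeas : ∃ J : Finset (Fin n), (∑ i ∈ J, (w i : ℤ)) = (W : ℤ))
    (I : Finset (Fin n)) :
    (∀ J : Finset (Fin n), |(∑ i ∈ I, q i) - Q| ≤ |(∑ i ∈ J, q i) - Q|) ↔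
      ((∑ i ∈ I, (w i : ℤ)) = (W : ℤ) ∧
        ∀ J : Finset (Fin n), (∑ i ∈ J, (w i : ℤ)) = (W : ℤ) →
          (∑ i ∈ J, (p i : ℤ)) ≤ ∑ i ∈ I, (p i : ℤ)) := by
  have hsumq : ∀ J : Finset (Fin n), (∑ i ∈ J, q i) - Q
      = 3 * P * ((∑ i ∈ J, (w i : ℤ)) - W) + ((∑ i ∈ J, (p i : ℤ)) - P) := by
    intro J
    simp only [hq, hQ]
    rw [Finset.sum_add_distrib, ← Finset.mul_sum]
    ring
  have hple : ∀ J : Finset (Fin n), (∑ i ∈ J, (p i : ℤ)) ≤ P := by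
    intro J
    rw [hP]
    exact Finset.sum_le_sum_of_subset_of_nonneg (Finset.subset_univ J)
      (fun i _ _ => Int.ofNat_nonneg _)
  have hppos : ∀ J : Finset (Fin n), 0 ≤ (∑ i ∈ J, (p i : ℤ)) := fun J =>
    Finset.sum_nonneg fun i _ => Int.ofNat_nonneg _
  have habs_feas : ∀ J, (∑ i ∈ J, (w i : ℤ)) = (W : ℤ) →
      |(∑ i ∈ J, q i) - Q| = P - ∑ i ∈ J, (p i : ℤ) := by
    intro J hJ
    rw [hsumq J, hJ]
    have h := hple J
    rw [show 3 * P * ((W:ℤ) - W) + ((∑ i ∈ J, (p i : ℤ)) - P)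
        = -(P - ∑ i ∈ J, (p i : ℤ)) by ring, abs_neg]
    exact abs_of_nonneg (by linarith)
  have habs_infeas : ∀ J, (∑ i ∈ J, (w i : ℤ)) ≠ (W : ℤ) →
      2 * P ≤ |(∑ i ∈ J, q i) - Q| := by
    intro J hJ
    rw [hsumq J]
    set a := 3 * P * ((∑ i ∈ J, (w i : ℤ)) - W) with ha
    set b := (∑ i ∈ J, (p i : ℤ)) - P with hb
    have h1 : 1 ≤ |(∑ i ∈ J, (w i : ℤ)) - (W:ℤ)| :=
      Int.one_le_abs (sub_ne_zero.mpr hJ)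
    have h2 : |a| = 3 * P * |(∑ i ∈ J, (w i : ℤ)) - W| := by
      rw [ha, abs_mul, abs_of_nonneg (by linarith : (0:ℤ) ≤ 3 * P)]
    have h3 : |b| ≤ P := by
      rw [abs_le]; constructor
      · linarith [hppos J]
      · linarith [hple J]
    have h4 : |a| - |b| ≤ |a + b| := by
      have := abs_add_le (a + b) (-b)
      simp at this
      linarith [this]
    have h5 : 3 * P ≤ |a| := by
      rw [h2]; nlinarith [h1]
    linarith
  constructor
  · intro hmin
    obtain ⟨J0, hJ0⟩ := hfeas
    have hI : (∑ i ∈ I, (w i : ℤ)) = (W : ℤ) := by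
      by_contra hne
      have h1 := habs_infeas I hne
      have h2 := hmin J0
      rw [habs_feas J0 hJ0] at h2
      linarith [hppos J0]
    refine ⟨hI, fun J hJ => ?_⟩
    have h2 := hmin J
    rw [habs_feas I hI, habs_feas J hJ] at h2
    linarith
  · rintro ⟨hI, hmax⟩ J
    rw [habs_feas I hI]
    by_cases hJ : (∑ i ∈ J, (w i : ℤ)) = (W : ℤ)
    · rw [habs_feas J hJ]
      linarith [hmax J hJ]
    · have := habs_infeas J hJ
      linarith [hppos I, hple I]
end

section
/- Assume P ≥ 1 and assume there exists at least one feasible subset J ⊆ {1,…,n} with w(J) = W. Then the knapsack instance has a unique optimal solution (i.e., there is exactly one subset I with w(I) = W attaining max{p(J) : w(J) = W}) if and only if the subset sum instance with goal value has a unique optimal solution (i.e., there is exactly one subset I minimizing |q(I) − Q| over all subsets of {1,…,n}). -/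
/-!
With `P = p(univ)`, every deviation splits as `q(I) - Q = 3P·(w(I) - W) + (p(I) - P)`, where
`0 ≤ p(I) ≤ P`. A feasible `I` therefore has `|q(I) - Q| = P - p(I) ≤ P`, while an infeasible
one has `|q(I) - Q| ≥ 2P`. As `P ≥ 1` and a feasible subset exists, the subsets closest to `Q`
are exactly the feasible subsets of maximal profit.
-/

open Finset

theorem two_mul_le_abs_three_mul_mul_add_sub {P d s : ℤ} (hs : 0 ≤ s) (hsP : s ≤ P)
    (hd : d ≠ 0) : 2 * P ≤ |3 * P * d + (s - P)| := by
  rcases hd.lt_or_gt with hd | hd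
  · exact le_abs.mpr (Or.inr (by nlinarith))
  · exact le_abs.mpr (Or.inl (by nlinarith))

section Reduction

variable {ι : Type*}

def IsKnapsackOptimal (w p : ι → ℕ) (W : ℕ) (I : Finset ι) : Prop :=
  ∑ i ∈ I, (w i : ℤ) = W ∧
    ∀ J : Finset ι, ∑ i ∈ J, (w i : ℤ) = W → ∑ i ∈ J, (p i : ℤ) ≤ ∑ i ∈ I, (p i : ℤ)

def IsClosestSubsetSum (q : ι → ℤ) (Q : ℤ) (I : Finset ι) : Prop :=
  ∀ J : Finset ι, |∑ i ∈ I, q i - Q| ≤ |∑ i ∈ J, q i - Q|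

theorem sum_three_mul_add_sub_eq (w p : ι → ℕ) (W : ℕ) (P : ℤ) (I : Finset ι) :
    ∑ i ∈ I, (3 * P * w i + p i) - (3 * W + 1) * P
      = 3 * P * (∑ i ∈ I, (w i : ℤ) - W) + (∑ i ∈ I, (p i : ℤ) - P) := by
  rw [sum_add_distrib, ← mul_sum]
  ring

variable [Fintype ι] (w p : ι → ℕ) (W : ℕ)

local notation "P" => ∑ i, (p i : ℤ)

theorem abs_sum_sub_eq_of_feasible {I : Finset ι} (hI : ∑ i ∈ I, (w i : ℤ) = W) :
    |∑ i ∈ I, (3 * P * w i + p i) - (3 * W + 1) * P| = P - ∑ i ∈ I, (p i : ℤ) := by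
  have hle : ∑ i ∈ I, (p i : ℤ) ≤ P := sum_le_univ_sum_of_nonneg fun _ ↦ by positivity
  rw [sum_three_mul_add_sub_eq, hI, sub_self, mul_zero, zero_add,
    abs_of_nonpos (sub_nonpos.mpr hle), neg_sub]

theorem two_mul_le_abs_sum_sub_of_infeasible {I : Finset ι} (hI : ∑ i ∈ I, (w i : ℤ) ≠ W) :
    2 * P ≤ |∑ i ∈ I, (3 * P * w i + p i) - (3 * W + 1) * P| := by
  rw [sum_three_mul_add_sub_eq]
  exact two_mul_le_abs_three_mul_mul_add_sub (by positivity)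
    (sum_le_univ_sum_of_nonneg fun _ ↦ by positivity) (sub_ne_zero.mpr hI)

theorem isKnapsackOptimal_iff_isClosestSubsetSum (hP : 1 ≤ P)
    (hfeas : ∃ J : Finset ι, ∑ i ∈ J, (w i : ℤ) = W) (I : Finset ι) :
    IsKnapsackOptimal w p W I ↔
      IsClosestSubsetSum (fun i ↦ 3 * P * w i + p i) ((3 * W + 1) * P) I := by
  have hp_nonneg (J : Finset ι) : 0 ≤ ∑ i ∈ J, (p i : ℤ) := by positivity
  constructor
  · rintro ⟨hIw, hImax⟩ J
    rw [abs_sum_sub_eq_of_feasible w p W hIw]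
    by_cases hJw : ∑ i ∈ J, (w i : ℤ) = W
    · rw [abs_sum_sub_eq_of_feasible w p W hJw]
      linarith [hImax J hJw]
    · linarith [two_mul_le_abs_sum_sub_of_infeasible w p W hJw, hp_nonneg I]
  · intro hI
    obtain ⟨J₀, hJ₀⟩ := hfeas
    have hI_le := hI J₀
    rw [abs_sum_sub_eq_of_feasible w p W hJ₀] at hI_le
    have hIw : ∑ i ∈ I, (w i : ℤ) = W := by
      by_contra hIw
      linarith [two_mul_le_abs_sum_sub_of_infeasible w p W hIw, hp_nonneg J₀]
    refine ⟨hIw, fun J hJw ↦ ?_⟩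
    have := hI J
    rw [abs_sum_sub_eq_of_feasible w p W hIw, abs_sum_sub_eq_of_feasible w p W hJw] at this
    linarith

end Reduction

/-- In the reduction where `P = Σ p_i ≥ 1`, `q_i = 3P·w_i + p_i`, `Q = (3W+1)·P`, and
assuming some feasible subset exists: the knapsack instance has a unique optimal
solution iff the subset sum instance with goal value `Q` has a unique optimal solution. -/
theorem knapsack_unique_iff_subsetsum_unique (n : ℕ) (w p : Fin n → ℕ) (W : ℕ)
    (P Q : ℤ) (hP : P = ∑ i : Fin n, (p i : ℤ)) (hQ : Q = (3 * W + 1) * P)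
    (q : Fin n → ℤ) (hq : ∀ i, q i = 3 * P * w i + p i)
    (hP1 : 1 ≤ P)
    (hfeas : ∃ J : Finset (Fin n), (∑ i ∈ J, (w i : ℤ)) = (W : ℤ)) :
    (∃! I : Finset (Fin n),
        (∑ i ∈ I, (w i : ℤ)) = (W : ℤ) ∧
          ∀ J : Finset (Fin n), (∑ i ∈ J, (w i : ℤ)) = (W : ℤ) →
            (∑ i ∈ J, (p i : ℤ)) ≤ ∑ i ∈ I, (p i : ℤ)) ↔
      (∃! I : Finset (Fin n),
        ∀ J : Finset (Fin n), |(∑ i ∈ I, q i) - Q| ≤ |(∑ i ∈ J, q i) - Q|) := by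
  obtain rfl : q = fun i ↦ 3 * P * w i + p i := funext hq
  subst hQ hP
  exact existsUnique_congr (isKnapsackOptimal_iff_isClosestSubsetSum w p W hP1 hfeas)
end

section
/- Every x ∈ {0,1}^{n+1} that minimizes f over {0,1}^{n+1} satisfies x_{n+1} = 1. -/
/-- The quadratic objective `f(x) = (Σ q_i x_i − 3Q·x_{n+1})·(Σ q_i x_i + Q·x_{n+1})`
on 0-1 vectors `x ∈ {0,1}^{n+1}`; coordinates `1,…,n` are indexed by `Fin.castSucc`
and coordinate `n+1` by `Fin.last n`. -/
def quadObj (n : ℕ) (q : Fin n → ℕ) (Q : ℤ) (x : Fin (n + 1) → ℤ) : ℤ :=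
  ((∑ i : Fin n, (q i : ℤ) * x i.castSucc) - 3 * Q * x (Fin.last n)) *
    ((∑ i : Fin n, (q i : ℤ) * x i.castSucc) + Q * x (Fin.last n))

/-- Every 0-1 vector minimizing `f` over `{0,1}^{n+1}` has `x_{n+1} = 1`. -/
theorem quadObj_minimizer_last_one (n : ℕ) (q : Fin n → ℕ) (Q : ℤ) (hQ : 0 < Q)
    (x : Fin (n + 1) → ℤ) (hx : ∀ i, x i = 0 ∨ x i = 1)
    (hmin : ∀ y : Fin (n + 1) → ℤ, (∀ i, y i = 0 ∨ y i = 1) →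
      quadObj n q Q x ≤ quadObj n q Q y) :
    x (Fin.last n) = 1 := by
  rcases hx (Fin.last n) with h0 | h1
  · exfalso
    set y : Fin (n + 1) → ℤ := Function.update x (Fin.last n) 1 with hy
    have hyb : ∀ i, y i = 0 ∨ y i = 1 := by
      intro i
      by_cases hi : i = Fin.last n
      · right; simp [hy, hi]
      · simpa [hy, Function.update_of_ne hi] using hx i
    have hsum : (∑ i : Fin n, (q i : ℤ) * y i.castSucc)
        = ∑ i : Fin n, (q i : ℤ) * x i.castSucc := by
      apply Finset.sum_congr rfl
      intro i _
      rw [hy, Function.update_of_ne (by exact (Fin.castSucc_lt_last i).ne)]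
    have hyl : y (Fin.last n) = 1 := by simp [hy]
    have h := hmin y hyb
    set S := ∑ i : Fin n, (q i : ℤ) * x i.castSucc with hS
    have hSnn : 0 ≤ S := Finset.sum_nonneg fun i _ => by
      rcases hx i.castSucc with h | h <;> simp [h]
    rw [quadObj, quadObj, hsum, hyl, h0, ← hS] at h
    nlinarith
  · exact h1
end

section
/- A vector x ∈ {0,1}^{n+1} minimizes f over {0,1}^{n+1} if and only if x_{n+1} = 1 and the truncated vector (x_1,…,x_n) minimizes |Σ_{i=1}^n q_i y_i − Q| over all y ∈ {0,1}^n. -/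
lemma sum_nonneg_01 {n : ℕ} (q : Fin n → ℕ) (y : Fin n → ℤ)
    (hy : ∀ i, y i = 0 ∨ y i = 1) : 0 ≤ ∑ i : Fin n, (q i : ℤ) * y i := by
  apply Finset.sum_nonneg
  intro i _
  rcases hy i with h | h <;> simp [h]

/-- A 0-1 vector `x` minimizes `f` over `{0,1}^{n+1}` iff `x_{n+1} = 1` and the
truncation `(x_1,…,x_n)` minimizes `|Σ q_i y_i − Q|` over all `y ∈ {0,1}^n`. -/
theorem quadObj_minimizer_iff (n : ℕ) (q : Fin n → ℕ) (Q : ℤ) (hQ : 0 < Q)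
    (x : Fin (n + 1) → ℤ) (hx : ∀ i, x i = 0 ∨ x i = 1) :
    (∀ y : Fin (n + 1) → ℤ, (∀ i, y i = 0 ∨ y i = 1) →
        quadObj n q Q x ≤ quadObj n q Q y) ↔
      (x (Fin.last n) = 1 ∧
        ∀ y : Fin n → ℤ, (∀ i, y i = 0 ∨ y i = 1) →
          |(∑ i : Fin n, (q i : ℤ) * x i.castSucc) - Q| ≤
            |(∑ i : Fin n, (q i : ℤ) * y i) - Q|) := by
  set S := ∑ i : Fin n, (q i : ℤ) * x i.castSucc with hS
  have hSnn : 0 ≤ S := sum_nonneg_01 q (fun i => x i.castSucc) (fun i => hx _)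
  constructor
  · intro h
    have hlast : x (Fin.last n) = 1 := by
      rcases hx (Fin.last n) with h0 | h1
      · exfalso
        have := h (Function.update x (Fin.last n) 1) (by
          intro i
          rcases eq_or_ne i (Fin.last n) with rfl | hne
          · right; simp
          · rw [Function.update_of_ne hne]; exact hx i)
        rw [quadObj, quadObj] at this
        have hcast : ∀ i : Fin n,
            Function.update x (Fin.last n) 1 i.castSucc = x i.castSucc := by
          intro i
          exact Function.update_of_ne (Fin.castSucc_lt_last i).ne 1 x
        simp only [hcast, Function.update_self, h0, ← hS] at this
        nlinarith [this]
      · exact h1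
    refine ⟨hlast, fun y hy => ?_⟩
    have := h (Fin.snoc y 1) (by
      intro i
      induction i using Fin.lastCases with
      | last => right; simp
      | cast j => simp only [Fin.snoc_castSucc]; exact hy j)
    rw [quadObj, quadObj] at this
    simp only [Fin.snoc_castSucc, Fin.snoc_last, hlast, ← hS] at this
    set T := ∑ i : Fin n, (q i : ℤ) * y i with hT
    nlinarith [sq_abs (S - Q), sq_abs (T - Q), abs_nonneg (S - Q), abs_nonneg (T - Q)]
  · rintro ⟨hlast, habs⟩ y hy
    set T := ∑ i : Fin n, (q i : ℤ) * y i.castSucc with hT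
    have hTnn : 0 ≤ T := sum_nonneg_01 q (fun i => y i.castSucc) (fun i => hy _)
    have habsT := habs (fun i => y i.castSucc) (fun i => hy _)
    rw [← hT] at habsT
    have hsq : (S - Q) ^ 2 ≤ (T - Q) ^ 2 := by
      nlinarith [sq_abs (S - Q), sq_abs (T - Q), abs_nonneg (S - Q), abs_nonneg (T - Q)]
    rw [quadObj, quadObj, ← hS, ← hT, hlast]
    rcases hy (Fin.last n) with h0 | h1
    · rw [h0]; nlinarith
    · rw [h1]; nlinarith
end

section
/- The function f has a unique minimizer over {0,1}^{n+1} if and only if the function y ↦ |Σ_{i=1}^n q_i y_i − Q| has a unique minimizer over {0,1}^n. -/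
theorem Fin.existsUnique_iff_of_forall_iff_last_eq_and_init {α : Type*} {n : ℕ}
    {P : (Fin (n + 1) → α) → Prop} {R : (Fin n → α) → Prop} (a : α)
    (h : ∀ x, P x ↔ x (Fin.last n) = a ∧ R (Fin.init x)) :
    (∃! x, P x) ↔ ∃! y, R y := by
  simp only [h]
  constructor
  · rintro ⟨x, ⟨-, hx⟩, huniq⟩
    refine ⟨Fin.init x, hx, fun y hy => ?_⟩
    rw [← huniq (Fin.snoc y a) ⟨Fin.snoc_last .., by rwa [Fin.init_snoc]⟩, Fin.init_snoc]
  · rintro ⟨y, hy, huniq⟩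
    refine ⟨Fin.snoc y a, ⟨Fin.snoc_last .., by rwa [Fin.init_snoc]⟩, ?_⟩
    rintro x ⟨rfl, hx⟩
    rw [← huniq _ hx, Fin.snoc_init_self]

def binaryVectors (ι : Type*) : Set (ι → ℤ) :=
  {x | ∀ i, x i = 0 ∨ x i = 1}

theorem zero_mem_binaryVectors (ι : Type*) : (0 : ι → ℤ) ∈ binaryVectors ι :=
  fun _ => Or.inl rfl

theorem snoc_mem_binaryVectors_iff {n : ℕ} {y : Fin n → ℤ} {t : ℤ} :
    (Fin.snoc y t : Fin (n + 1) → ℤ) ∈ binaryVectors (Fin (n + 1)) ↔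
      y ∈ binaryVectors (Fin n) ∧ (t = 0 ∨ t = 1) := by
  simp [binaryVectors, Fin.forall_fin_succ']

section

variable {n : ℕ} (q : Fin n → ℕ) {Q : ℤ}

theorem quadObj_snoc_zero (y : Fin n → ℤ) :
    quadObj n q Q (Fin.snoc y 0) = (∑ i, (q i : ℤ) * y i) ^ 2 := by
  simp only [quadObj, Fin.snoc_castSucc, Fin.snoc_last]
  ring

theorem quadObj_snoc_one (y : Fin n → ℤ) :
    quadObj n q Q (Fin.snoc y 1) = (∑ i, (q i : ℤ) * y i - Q) ^ 2 - 4 * Q ^ 2 := by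
  simp only [quadObj, Fin.snoc_castSucc, Fin.snoc_last]
  ring

theorem not_isMinOn_quadObj_snoc_zero (hQ : 0 < Q) (y : Fin n → ℤ) :
    ¬IsMinOn (quadObj n q Q) (binaryVectors (Fin (n + 1))) (Fin.snoc y 0) := by
  intro hmin
  have h := isMinOn_iff.1 hmin _
    (snoc_mem_binaryVectors_iff.2 ⟨zero_mem_binaryVectors _, Or.inr rfl⟩)
  rw [quadObj_snoc_zero, quadObj_snoc_one] at h
  simp only [Pi.zero_apply, mul_zero, Finset.sum_const_zero] at h
  nlinarith [sq_nonneg (∑ i, (q i : ℤ) * y i)]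

theorem isMinOn_quadObj_snoc_one_iff (y : Fin n → ℤ) :
    IsMinOn (quadObj n q Q) (binaryVectors (Fin (n + 1))) (Fin.snoc y 1) ↔
      IsMinOn (fun z => |∑ i, (q i : ℤ) * z i - Q|) (binaryVectors (Fin n)) y := by
  simp only [isMinOn_iff, quadObj_snoc_one, ← sq_le_sq]
  constructor
  · intro hmin z hz
    have := hmin _ (snoc_mem_binaryVectors_iff.2 ⟨hz, Or.inr rfl⟩)
    rw [quadObj_snoc_one] at this
    linarith
  · intro hmin x hx
    rw [← Fin.snoc_init_self x] at hx ⊢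
    obtain ⟨hz, hlast | hlast⟩ := snoc_mem_binaryVectors_iff.1 hx <;> rw [hlast]
    · -- `f (y, 1) ≤ f (0, 1) = -3Q² ≤ 0`
      have := hmin 0 (zero_mem_binaryVectors _)
      simp only [Pi.zero_apply, mul_zero, Finset.sum_const_zero, zero_sub, even_two,
        Even.neg_pow] at this
      rw [quadObj_snoc_zero]
      nlinarith [sq_nonneg (∑ i, (q i : ℤ) * Fin.init x i)]
    · rw [quadObj_snoc_one]
      linarith [hmin _ hz]

theorem mem_binaryVectors_and_isMinOn_quadObj_iff (hQ : 0 < Q)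
    (x : Fin (n + 1) → ℤ) :
    (x ∈ binaryVectors (Fin (n + 1)) ∧ IsMinOn (quadObj n q Q) (binaryVectors _) x) ↔
      x (Fin.last n) = 1 ∧ (Fin.init x ∈ binaryVectors (Fin n) ∧
        IsMinOn (fun z => |∑ i, (q i : ℤ) * z i - Q|) (binaryVectors _) (Fin.init x)) := by
  obtain ⟨y, t, rfl⟩ : ∃ y t, x = Fin.snoc y t := ⟨_, _, (Fin.snoc_init_self x).symm⟩
  rw [snoc_mem_binaryVectors_iff, Fin.snoc_last, Fin.init_snoc]
  constructor
  · rintro ⟨⟨hy, rfl | rfl⟩, hmin⟩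
    · exact absurd hmin (not_isMinOn_quadObj_snoc_zero q hQ y)
    · exact ⟨rfl, hy, (isMinOn_quadObj_snoc_one_iff q y).1 hmin⟩
  · rintro ⟨rfl, hy, hmin⟩
    exact ⟨⟨hy, Or.inr rfl⟩, (isMinOn_quadObj_snoc_one_iff q y).2 hmin⟩

end

/-- `f` has a unique minimizer over `{0,1}^{n+1}` iff `y ↦ |Σ q_i y_i − Q|` has a
unique minimizer over `{0,1}^n`. -/
theorem quadObj_unique_minimizer_iff (n : ℕ) (q : Fin n → ℕ) (Q : ℤ) (hQ : 0 < Q) :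
    (∃! x : Fin (n + 1) → ℤ, (∀ i, x i = 0 ∨ x i = 1) ∧
        ∀ y : Fin (n + 1) → ℤ, (∀ i, y i = 0 ∨ y i = 1) →
          quadObj n q Q x ≤ quadObj n q Q y) ↔
      (∃! x : Fin n → ℤ, (∀ i, x i = 0 ∨ x i = 1) ∧
        ∀ y : Fin n → ℤ, (∀ i, y i = 0 ∨ y i = 1) →
          |(∑ i : Fin n, (q i : ℤ) * x i) - Q| ≤
            |(∑ i : Fin n, (q i : ℤ) * y i) - Q|) :=
  Fin.existsUnique_iff_of_forall_iff_last_eq_and_init 1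
    (mem_binaryVectors_and_isMinOn_quadObj_iff q hQ)
end

section
/- Assume P ≥ 1 and assume there exists at least one y ∈ {0,1}^n with Σ_{i=1}^n w_i y_i = W. Then every x ∈ {0,1}^n that maximizes f over {0,1}^n satisfies Σ_{i=1}^n w_i x_i = W. -/
/-- The hyperbolic objective
`f(x) = (2 + Σ p_i x_i) / (1 + 2P·(W − Σ w_i x_i))` with `P = Σ p_i`,
regarded as a rational number, on 0-1 vectors `x ∈ {0,1}^n`. -/
def hypObj (n : ℕ) (w p : Fin n → ℕ) (W : ℕ) (x : Fin n → ℤ) : ℚ :=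
  ((2 + ∑ i : Fin n, (p i : ℤ) * x i : ℤ) : ℚ) /
    ((1 + 2 * (∑ i : Fin n, (p i : ℤ)) *
        ((W : ℤ) - ∑ i : Fin n, (w i : ℤ) * x i) : ℤ) : ℚ)

/-- If `P ≥ 1` and some 0-1 vector `y` satisfies `Σ w_i y_i = W`, then every 0-1
vector maximizing `f` over `{0,1}^n` satisfies `Σ w_i x_i = W`. -/
theorem hypObj_maximizer_feasible (n : ℕ) (w p : Fin n → ℕ) (W : ℕ)
    (hP : 1 ≤ ∑ i : Fin n, (p i : ℤ))
    (hfeas : ∃ y : Fin n → ℤ, (∀ i, y i = 0 ∨ y i = 1) ∧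
      (∑ i : Fin n, (w i : ℤ) * y i) = (W : ℤ))
    (x : Fin n → ℤ) (hx : ∀ i, x i = 0 ∨ x i = 1)
    (hmax : ∀ y : Fin n → ℤ, (∀ i, y i = 0 ∨ y i = 1) →
      hypObj n w p W y ≤ hypObj n w p W x) :
    (∑ i : Fin n, (w i : ℤ) * x i) = (W : ℤ) := by
  obtain ⟨y, hy, hyW⟩ := hfeas
  by_contra hne
  have hS0 : ∀ z : Fin n → ℤ, (∀ i, z i = 0 ∨ z i = 1) →
      0 ≤ ∑ i : Fin n, (p i : ℤ) * z i := by
    intro z hz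
    apply Finset.sum_nonneg
    intro i _
    rcases hz i with h | h <;> simp [h]
  have hSP : (∑ i : Fin n, (p i : ℤ) * x i) ≤ ∑ i : Fin n, (p i : ℤ) := by
    apply Finset.sum_le_sum
    intro i _
    rcases hx i with h | h <;> simp [h, Int.ofNat_nonneg]
  -- feasible y has objective ≥ 2
  have h2le : (2 : ℚ) ≤ hypObj n w p W y := by
    have hfy : hypObj n w p W y = ((2 + ∑ i : Fin n, (p i : ℤ) * y i : ℤ) : ℚ) := by
      unfold hypObj
      rw [hyW]
      simp
    rw [hfy]
    have h := hS0 y hy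
    have : (2 : ℤ) ≤ 2 + ∑ i : Fin n, (p i : ℤ) * y i := by linarith
    exact_mod_cast this
  set S := ∑ i : Fin n, (p i : ℤ) * x i with hSdef
  set T := ∑ i : Fin n, (w i : ℤ) * x i with hTdef
  set P := ∑ i : Fin n, (p i : ℤ) with hPdef
  have hS0x : 0 ≤ S := hS0 x hx
  have hlt : hypObj n w p W x < 2 := by
    have hunfold : hypObj n w p W x =
        ((2 + S : ℤ) : ℚ) / ((1 + 2 * P * ((W : ℤ) - T) : ℤ) : ℚ) := rfl
    rw [hunfold]
    rcases lt_or_gt_of_ne hne with hlt' | hgt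
    · -- T < W, denominator ≥ 1 + 2P ≥ 3
      have hWT : (1 : ℤ) ≤ (W : ℤ) - T := by linarith
      have hD : (1 : ℤ) + 2 * P ≤ 1 + 2 * P * ((W : ℤ) - T) := by nlinarith
      have hDpos : (0 : ℤ) < 1 + 2 * P * ((W : ℤ) - T) := by linarith
      have hnum : (2 : ℤ) + S < 2 * (1 + 2 * P * ((W : ℤ) - T)) := by nlinarith
      have hDposQ : (0 : ℚ) < ((1 + 2 * P * ((W : ℤ) - T) : ℤ) : ℚ) := by
        exact_mod_cast hDpos
      rw [div_lt_iff₀ hDposQ]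
      calc ((2 + S : ℤ) : ℚ) < ((2 * (1 + 2 * P * ((W : ℤ) - T)) : ℤ) : ℚ) := by
            exact_mod_cast hnum
        _ = 2 * ((1 + 2 * P * ((W : ℤ) - T) : ℤ) : ℚ) := by push_cast; ring
    · -- T > W, denominator ≤ 1 - 2P < 0, numerator > 0
      have hWT : (W : ℤ) - T ≤ -1 := by linarith
      have hD : 1 + 2 * P * ((W : ℤ) - T) ≤ -1 := by nlinarith
      have hDnegQ : ((1 + 2 * P * ((W : ℤ) - T) : ℤ) : ℚ) < 0 := by
        exact_mod_cast lt_of_le_of_lt hD (by norm_num)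
      have hnumQ : (0 : ℚ) < ((2 + S : ℤ) : ℚ) := by
        exact_mod_cast (by linarith : (0 : ℤ) < 2 + S)
      have := div_neg_of_pos_of_neg hnumQ hDnegQ
      linarith
  have := hmax y hy
  linarith
end

section
/- Assume P ≥ 1 and assume there exists at least one y ∈ {0,1}^n with Σ_{i=1}^n w_i y_i = W. Then a vector x ∈ {0,1}^n maximizes f over {0,1}^n if and only if Σ_{i=1}^n w_i x_i = W and Σ_{i=1}^n p_i x_i = max{ Σ_{i=1}^n p_i y_i : y ∈ {0,1}^n, Σ_{i=1}^n w_i y_i = W }. -/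
section ZeroOneSums

variable {ι : Type*} [Fintype ι] {c x : ι → ℤ}

lemma sum_mul_zeroOne_nonneg (hc : ∀ i, 0 ≤ c i) (hx : ∀ i, x i = 0 ∨ x i = 1) :
    0 ≤ ∑ i, c i * x i :=
  Finset.sum_nonneg fun i _ => by rcases hx i with h | h <;> simp [h, hc i]

lemma sum_mul_zeroOne_le (hc : ∀ i, 0 ≤ c i) (hx : ∀ i, x i = 0 ∨ x i = 1) :
    ∑ i, c i * x i ≤ ∑ i, c i :=
  Finset.sum_le_sum fun i _ => by rcases hx i with h | h <;> simp [h, hc i]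

end ZeroOneSums

lemma intCast_div_le_one_of_ne_zero {S P t : ℤ} (hS : 0 ≤ S) (hSP : S ≤ P) (hP : 1 ≤ P)
    (ht : t ≠ 0) : ((2 + S : ℤ) : ℚ) / ((1 + 2 * P * t : ℤ) : ℚ) ≤ 1 := by
  rcases ht.lt_or_gt with ht | ht
  · have hden : ((1 + 2 * P * t : ℤ) : ℚ) < 0 := by
      exact_mod_cast (by nlinarith : 1 + 2 * P * t < 0)
    have hnum : (0 : ℚ) ≤ ((2 + S : ℤ) : ℚ) := by exact_mod_cast (by linarith : 0 ≤ 2 + S)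
    exact (div_nonpos_of_nonneg_of_nonpos hnum hden.le).trans zero_le_one
  · have hden : (0 : ℤ) < 1 + 2 * P * t := by nlinarith
    rw [div_le_one (by exact_mod_cast hden)]
    exact_mod_cast (by nlinarith : 2 + S ≤ 1 + 2 * P * t)

section HypObj

variable {n : ℕ} {w p : Fin n → ℕ} {W : ℕ} {x y : Fin n → ℤ}

lemma hypObj_of_sum_eq (hw : ∑ i, (w i : ℤ) * x i = W) :
    hypObj n w p W x = ((2 + ∑ i, (p i : ℤ) * x i : ℤ) : ℚ) := by
  simp [hypObj, hw]

lemma two_le_hypObj_of_sum_eq (hx : ∀ i, x i = 0 ∨ x i = 1)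
    (hw : ∑ i, (w i : ℤ) * x i = W) : 2 ≤ hypObj n w p W x := by
  rw [hypObj_of_sum_eq hw]
  exact_mod_cast le_add_of_nonneg_right (sum_mul_zeroOne_nonneg (fun i => (p i).cast_nonneg) hx)

lemma hypObj_le_one_of_sum_ne (hP : 1 ≤ ∑ i, (p i : ℤ)) (hx : ∀ i, x i = 0 ∨ x i = 1)
    (hw : ∑ i, (w i : ℤ) * x i ≠ W) : hypObj n w p W x ≤ 1 :=
  intCast_div_le_one_of_ne_zero (sum_mul_zeroOne_nonneg (fun i => (p i).cast_nonneg) hx)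
    (sum_mul_zeroOne_le (fun i => (p i).cast_nonneg) hx) hP (sub_ne_zero.mpr hw.symm)

lemma hypObj_le_hypObj_iff_of_sum_eq (hwx : ∑ i, (w i : ℤ) * x i = W)
    (hwy : ∑ i, (w i : ℤ) * y i = W) :
    hypObj n w p W y ≤ hypObj n w p W x ↔
      ∑ i, (p i : ℤ) * y i ≤ ∑ i, (p i : ℤ) * x i := by
  rw [hypObj_of_sum_eq hwx, hypObj_of_sum_eq hwy, Int.cast_le, add_le_add_iff_left]

end HypObj

/-- If `P ≥ 1` and some 0-1 vector `y` satisfies `Σ w_i y_i = W`, then a 0-1 vector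
`x` maximizes `f` over `{0,1}^n` iff `Σ w_i x_i = W` and `Σ p_i x_i` is maximum
among all feasible 0-1 vectors. -/
theorem hypObj_maximizer_iff (n : ℕ) (w p : Fin n → ℕ) (W : ℕ)
    (hP : 1 ≤ ∑ i : Fin n, (p i : ℤ))
    (hfeas : ∃ y : Fin n → ℤ, (∀ i, y i = 0 ∨ y i = 1) ∧
      (∑ i : Fin n, (w i : ℤ) * y i) = (W : ℤ))
    (x : Fin n → ℤ) (hx : ∀ i, x i = 0 ∨ x i = 1) :
    (∀ y : Fin n → ℤ, (∀ i, y i = 0 ∨ y i = 1) →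
        hypObj n w p W y ≤ hypObj n w p W x) ↔
      ((∑ i : Fin n, (w i : ℤ) * x i) = (W : ℤ) ∧
        ∀ y : Fin n → ℤ, (∀ i, y i = 0 ∨ y i = 1) →
          (∑ i : Fin n, (w i : ℤ) * y i) = (W : ℤ) →
            (∑ i : Fin n, (p i : ℤ) * y i) ≤ ∑ i : Fin n, (p i : ℤ) * x i) := by
  constructor
  · intro hmax
    obtain ⟨y₀, hy₀, hwy₀⟩ := hfeas
    have hwx : ∑ i, (w i : ℤ) * x i = W := by
      by_contra hne
      have := (two_le_hypObj_of_sum_eq (p := p) hy₀ hwy₀).trans (hmax y₀ hy₀)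
      linarith [hypObj_le_one_of_sum_ne hP hx hne]
    exact ⟨hwx, fun y hy hwy => (hypObj_le_hypObj_iff_of_sum_eq hwx hwy).mp (hmax y hy)⟩
  · rintro ⟨hwx, hopt⟩ y hy
    by_cases hwy : ∑ i, (w i : ℤ) * y i = W
    · exact (hypObj_le_hypObj_iff_of_sum_eq hwx hwy).mpr (hopt y hy hwy)
    · linarith [hypObj_le_one_of_sum_ne hP hy hwy, two_le_hypObj_of_sum_eq (p := p) hx hwx]
end
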